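/- Fix a constant q > 0 and let B_SE[U] = {M | SE[U](M) ≤ q}, restricted to programs without low-security inputs. Then B_SE[U] is not a k-safety property for any k > 0; that is, for every k > 0 there exists a program M with SE[U](M) > q such that for every trace set T ⊆ ⟦M⟧ with |T| ≤ k there exists a program M' with T ⊆ ⟦M'⟧ and SE[U](M') ≤ q. -/

import Mathlib

/-!
Under the uniform distribution on `n` inputs, `SE[U](M) = log n - Σₒ (|M⁻¹ o| / n) log |M⁻¹ o|`.
A program that is injective on `2^m` inputs therefore leaks `m > q` bits. Conversely, any `k`
of its traces also belong to a program on `{0, …, N-1}` that is constant off the at most `k`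
traced inputs; its fibre of size at least `N - k` bounds its flow by
`log N - ((N - k)/N) log (N - k)`, which tends to `0` as `N → ∞`.
-/

/-- A deterministic program without low-security inputs: a finite nonempty
high-security input set `Hs` and behavior `f` (inputs and outputs drawn from
the fixed countable universe `ℕ`). -/
structure ProgNL where
  Hs : Finset ℕ
  hH : Hs.Nonempty
  f : ℕ → ℕ

/-- The set of traces `⟦M⟧ = {(h,o) | h ∈ ℍ, o = M(h)}`. -/
def ProgNL.traces (M : ProgNL) : Set (ℕ × ℕ) :=
  {t | t.1 ∈ M.Hs ∧ t.2 = M.f t.1}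

/-- The uniform distribution on the input set of `M`. -/
noncomputable def ProgNL.U (M : ProgNL) : ℕ → ℝ :=
  fun h => if h ∈ M.Hs then (M.Hs.card : ℝ)⁻¹ else 0

/-- `p · log₂(1/p)`, one summand of the Shannon entropy. -/
noncomputable def entTerm (p : ℝ) : ℝ := p * Real.logb 2 (1 / p)

/-- Probability `U(O = o)` where `O = M(H)`. -/
noncomputable def ProgNL.pO (M : ProgNL) (o : ℕ) : ℝ :=
  ∑ h ∈ M.Hs, if M.f h = o then M.U h else 0

/-- Shannon entropy `𝓗[U](H)`. -/
noncomputable def ProgNL.entH (M : ProgNL) : ℝ :=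
  ∑ h ∈ M.Hs, entTerm (M.U h)

/-- Conditional Shannon entropy `𝓗[U](H|O)` where `O = M(H)`. -/
noncomputable def ProgNL.entHO (M : ProgNL) : ℝ :=
  ∑ o ∈ M.Hs.image M.f,
    M.pO o * ∑ h ∈ M.Hs, entTerm ((if M.f h = o then M.U h else 0) / M.pO o)

/-- Shannon-entropy-based QIF under the uniform distribution:
`SE[U](M) = 𝓗[U](H) − 𝓗[U](H|O)`. -/
noncomputable def ProgNL.SEU (M : ProgNL) : ℝ :=
  M.entH - M.entHO

open Filter Topology

lemma entTerm_zero : entTerm 0 = 0 := by simp [entTerm]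

lemma entTerm_inv (c : ℝ) : entTerm c⁻¹ = c⁻¹ * Real.logb 2 c := by
  simp [entTerm]

lemma tendsto_logb_sub_div_mul_logb_sub (k : ℝ) :
    Tendsto (fun x => Real.logb 2 x - (x - k) / x * Real.logb 2 (x - k)) atTop (𝓝 0) := by
  have hgap : Tendsto (fun x => Real.log x - Real.log (x - k)) atTop (𝓝 0) := by
    simpa [sub_eq_add_neg] using (Real.tendsto_log_comp_add_sub_log (-k)).neg
  have hratio : Tendsto (fun x : ℝ => (x - k) / x) atTop (𝓝 1) := by
    have := (tendsto_const_nhds (x := k)).div_atTop tendsto_id |>.const_sub (1 : ℝ)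
    rw [sub_zero] at this
    refine this.congr' ?_
    filter_upwards [eventually_ne_atTop 0] with x hx
    dsimp only [id]
    field_simp
  have hlog_div : Tendsto (fun x => Real.log x / x) atTop (𝓝 0) := by
    simpa using Real.tendsto_pow_log_div_mul_add_atTop 1 0 1 one_ne_zero
  have hlim := ((hratio.mul hgap).add (hlog_div.const_mul k)).div_const (Real.log 2)
  simp only [mul_zero, add_zero, zero_div] at hlim
  refine hlim.congr' ?_
  filter_upwards [eventually_ne_atTop 0] with x hx
  -- `log x = ((x - k)/x) log x + (k/x) log x` splits off the vanishing gap `log x - log (x - k)`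
  simp only [Real.logb]
  field_simp
  ring

namespace ProgNL

variable (M : ProgNL)

def fiberCard (o : ℕ) : ℕ := (M.Hs.filter (M.f · = o)).card

lemma card_Hs_pos : (0 : ℝ) < M.Hs.card := by exact_mod_cast M.hH.card_pos

lemma U_of_mem {h : ℕ} (hh : h ∈ M.Hs) : M.U h = (M.Hs.card : ℝ)⁻¹ := if_pos hh

lemma pO_eq (o : ℕ) : M.pO o = M.fiberCard o / M.Hs.card := by
  rw [pO, ← Finset.sum_filter, Finset.sum_congr rfl fun h hh => M.U_of_mem (Finset.mem_filter.mp hh).1,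
    Finset.sum_const, nsmul_eq_mul, fiberCard, div_eq_mul_inv]

lemma fiberCard_pos {o : ℕ} (ho : o ∈ M.Hs.image M.f) : 0 < M.fiberCard o := by
  obtain ⟨h, hh, rfl⟩ := Finset.mem_image.mp ho
  exact Finset.card_pos.mpr ⟨h, Finset.mem_filter.mpr ⟨hh, rfl⟩⟩

lemma entH_eq : M.entH = Real.logb 2 M.Hs.card := by
  rw [entH, Finset.sum_congr rfl fun h hh => by rw [M.U_of_mem hh], Finset.sum_const,
    nsmul_eq_mul, entTerm_inv, ← mul_assoc, mul_inv_cancel₀ M.card_Hs_pos.ne', one_mul]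

/-- Given the output `o`, the input is uniform on the fibre of `o`. -/
lemma condEntropy_eq_logb_fiberCard {o : ℕ} (ho : o ∈ M.Hs.image M.f) :
    ∑ h ∈ M.Hs, entTerm ((if M.f h = o then M.U h else 0) / M.pO o) =
      Real.logb 2 (M.fiberCard o) := by
  have hc : (0 : ℝ) < M.fiberCard o := by exact_mod_cast M.fiberCard_pos ho
  have hterm : ∀ h ∈ M.Hs, entTerm ((if M.f h = o then M.U h else 0) / M.pO o) =
      if M.f h = o then entTerm (M.fiberCard o : ℝ)⁻¹ else 0 := by
    intro h hh
    split_ifs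
    · rw [M.U_of_mem hh, M.pO_eq]
      field_simp [M.card_Hs_pos.ne']
    · rw [zero_div, entTerm_zero]
  rw [Finset.sum_congr rfl hterm, ← Finset.sum_filter, Finset.sum_const, nsmul_eq_mul,
    ← fiberCard, entTerm_inv, ← mul_assoc, mul_inv_cancel₀ hc.ne', one_mul]

lemma entHO_eq : M.entHO =
    ∑ o ∈ M.Hs.image M.f, (M.fiberCard o / M.Hs.card : ℝ) * Real.logb 2 (M.fiberCard o) := by
  rw [entHO]
  refine Finset.sum_congr rfl fun o ho => ?_
  rw [M.condEntropy_eq_logb_fiberCard ho, M.pO_eq]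

lemma SEU_eq : M.SEU = Real.logb 2 M.Hs.card -
    ∑ o ∈ M.Hs.image M.f, (M.fiberCard o / M.Hs.card : ℝ) * Real.logb 2 (M.fiberCard o) := by
  rw [SEU, entH_eq, entHO_eq]

lemma SEU_eq_logb_card_of_injOn (hinj : Set.InjOn M.f M.Hs) :
    M.SEU = Real.logb 2 M.Hs.card := by
  have hone : ∀ o ∈ M.Hs.image M.f, M.fiberCard o = 1 := by
    intro o ho
    refine le_antisymm (Finset.card_le_one.mpr fun a ha b hb => ?_) (M.fiberCard_pos ho)
    rw [Finset.mem_filter] at ha hb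
    exact hinj ha.1 hb.1 (ha.2.trans hb.2.symm)
  rw [SEU_eq, Finset.sum_eq_zero fun o ho => by simp [hone o ho], sub_zero]

/-- All summands of the conditional entropy are nonnegative and `x ↦ x log x` is monotone
on `[1, ∞)`. -/
lemma SEU_le_of_le_fiberCard {o m : ℕ} (hm : 0 < m) (hmo : m ≤ M.fiberCard o) :
    M.SEU ≤ Real.logb 2 M.Hs.card - (m / M.Hs.card : ℝ) * Real.logb 2 m := by
  have ho : o ∈ M.Hs.image M.f := by
    obtain ⟨h, hh⟩ := Finset.card_pos.mp (hm.trans_le hmo)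
    exact Finset.mem_image.mpr ⟨h, (Finset.mem_filter.mp hh).1, (Finset.mem_filter.mp hh).2⟩
  have hnonneg : ∀ c ∈ M.Hs.image M.f,
      0 ≤ (M.fiberCard c / M.Hs.card : ℝ) * Real.logb 2 (M.fiberCard c) := fun c hc =>
    mul_nonneg (by positivity)
      (Real.logb_nonneg one_lt_two (by exact_mod_cast M.fiberCard_pos hc))
  have hmR : (1 : ℝ) ≤ m := by exact_mod_cast hm
  have hmoR : (m : ℝ) ≤ M.fiberCard o := by exact_mod_cast hmo
  rw [SEU_eq]
  gcongr
  calc (m / M.Hs.card : ℝ) * Real.logb 2 m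
      ≤ (M.fiberCard o / M.Hs.card : ℝ) * Real.logb 2 (M.fiberCard o) := by
        gcongr
        exacts [Real.logb_nonneg one_lt_two hmR, one_lt_two]
    _ ≤ _ := Finset.single_le_sum hnonneg ho

lemma traces_eq_image : M.traces = (fun h => (h, M.f h)) '' M.Hs := by
  ext ⟨h, o⟩
  simp [traces, eq_comm]

lemma traces_finite : M.traces.Finite := by
  rw [traces_eq_image]
  exact (Finset.finite_toSet _).image _

def patch (A : Finset ℕ) (hA : A.Nonempty) (S : Finset ℕ) (g : ℕ → ℕ) : ProgNL :=
  ⟨A, hA, fun h => if h ∈ S then g h else 0⟩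

lemma card_sub_card_le_fiberCard_patch (A : Finset ℕ) (hA : A.Nonempty) (S : Finset ℕ)
    (g : ℕ → ℕ) : A.card - S.card ≤ (patch A hA S g).fiberCard 0 := by
  refine (Finset.le_card_sdiff S A).trans (Finset.card_le_card fun h hh => ?_)
  rw [Finset.mem_sdiff] at hh
  exact Finset.mem_filter.mpr ⟨hh.1, if_neg hh.2⟩

theorem exists_traces_superset_SEU_le {q : ℝ} (hq : 0 < q) {k : ℕ} {T : Set (ℕ × ℕ)}
    (hT : T ⊆ M.traces) (hTk : T.ncard ≤ k) :
    ∃ M' : ProgNL, T ⊆ M'.traces ∧ M'.SEU ≤ q := by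
  have hTfin : T.Finite := M.traces_finite.subset hT
  set S := hTfin.toFinset.image Prod.fst
  have hSk : S.card ≤ k :=
    Finset.card_image_le.trans ((Set.ncard_eq_toFinset_card T hTfin).symm.trans_le hTk)
  obtain ⟨n, hn⟩ := M.Hs.exists_nat_subset_range
  have hsmall : ∀ᶠ N : ℕ in atTop,
      Real.logb 2 N - (N - k) / N * Real.logb 2 (N - k) < q :=
    ((tendsto_logb_sub_div_mul_logb_sub k).comp tendsto_natCast_atTop_atTop).eventually_lt_const hq
  obtain ⟨N, hNq, hnN, hkN⟩ :=
    (hsmall.and ((eventually_ge_atTop n).and (eventually_gt_atTop k))).exists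
  have hA : (Finset.range N).Nonempty := Finset.nonempty_range_iff.mpr (by omega)
  refine ⟨patch (Finset.range N) hA S M.f, ?_, ?_⟩
  · rintro ⟨h, o⟩ ht
    obtain ⟨hh, rfl⟩ : h ∈ M.Hs ∧ o = M.f h := hT ht
    have hhS : h ∈ S := Finset.mem_image.mpr ⟨(h, M.f h), hTfin.mem_toFinset.mpr ht, rfl⟩
    exact ⟨Finset.range_subset_range.mpr hnN (hn hh), (if_pos hhS).symm⟩
  · have hfib := (card_sub_card_le_fiberCard_patch (Finset.range N) hA S M.f).trans'
      (Nat.sub_le_sub_left hSk _)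
    rw [Finset.card_range] at hfib
    refine ((patch (Finset.range N) hA S M.f).SEU_le_of_le_fiberCard (by omega) hfib).trans ?_
    rw [patch, Finset.card_range, Nat.cast_sub hkN.le]
    exact hNq.le

lemma exists_SEU_gt (q : ℝ) : ∃ M : ProgNL, q < M.SEU := by
  obtain ⟨m, hm⟩ := exists_nat_gt q
  refine ⟨⟨Finset.range (2 ^ m), Finset.nonempty_range_iff.mpr (by positivity), id⟩, ?_⟩
  rw [SEU_eq_logb_card_of_injOn _ (Set.injOn_id _), Finset.card_range, Nat.cast_pow, Nat.cast_ofNat,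
    Real.logb_pow, Real.logb_self_eq_one one_lt_two, mul_one]
  exact hm

end ProgNL

/-- For any constant `q > 0`, `B_SE[U] = {M | SE[U](M) ≤ q}` is not a
`k`-safety property for any `k > 0`: every potential counterexample trace set
of size at most `k` extends to a program whose flow is at most `q`. -/
theorem B_SE_not_ksafety (q : ℝ) (hq : 0 < q) :
    ∀ k : ℕ, 0 < k →
      ∃ M : ProgNL, q < M.SEU ∧
        ∀ T ⊆ M.traces, T.ncard ≤ k →
          ∃ M' : ProgNL, T ⊆ M'.traces ∧ M'.SEU ≤ q := by
  intro k _
  obtain ⟨M, hM⟩ := ProgNL.exists_SEU_gt q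
  exact ⟨M, hM, fun T hT hTk => M.exists_traces_superset_SEU_le hq hT hTk⟩
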